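/- Let θ, θ′ ∈ ℝ³ with θ₀ > √(θ₁²+θ₂²) and θ₀′ > √(θ₁′²+θ₂′²), and suppose additionally that 2θ′ − θ satisfies (2θ′−θ)₀ > √((2θ′−θ)₁² + (2θ′−θ)₂²). Then the Neyman chi-squared divergence (f(u) = (u−1)²) between the 2D hyperboloid distributions p_θ and p_{θ′} equals |θ′|²·exp(2|θ′|) / ( |θ|·|2θ′−θ|·exp(|θ| + |2θ′−θ|) ) − 1, where |η| = √(η₀²−η₁²−η₂²). -/

import Mathlib

open MeasureTheory

/-- The Minkowski inner product on ℝ³ (as ℝ × ℝ × ℝ). -/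
noncomputable def mink3 (θ η : ℝ × ℝ × ℝ) : ℝ :=
  θ.1 * η.1 - θ.2.1 * η.2.1 - θ.2.2 * η.2.2

/-- The Minkowski norm |θ| = √(θ₀²−θ₁²−θ₂²). -/
noncomputable def mnorm (θ : ℝ × ℝ × ℝ) : ℝ :=
  Real.sqrt (θ.1 ^ 2 - θ.2.1 ^ 2 - θ.2.2 ^ 2)

/-- The parameter space condition θ₀ > √(θ₁²+θ₂²). -/
def inHypParam (θ : ℝ × ℝ × ℝ) : Prop :=
  Real.sqrt (θ.2.1 ^ 2 + θ.2.2 ^ 2) < θ.1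

/-- The density of the 2D hyperboloid distribution on ℝ². -/
noncomputable def hypDensity2 (θ : ℝ × ℝ × ℝ) (x : ℝ × ℝ) : ℝ :=
  mnorm θ * Real.exp (mnorm θ) / (2 * Real.pi) *
    Real.exp (-(θ.1 * Real.sqrt (1 + x.1 ^ 2 + x.2 ^ 2) - θ.2.1 * x.1 - θ.2.2 * x.2)) /
      Real.sqrt (1 + x.1 ^ 2 + x.2 ^ 2)

/-- The f-divergence between two densities on ℝ². -/
noncomputable def fDivL (f : ℝ → ℝ) (p q : ℝ × ℝ → ℝ) : ℝ :=
  ∫ z : ℝ × ℝ, p z * f (q z / p z)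

open Real Set Filter Topology

/-!
The exponent of `p_θ` is linear in `θ`, so `p_{θ'}² / p_θ` is a constant multiple of
`p_{2θ'-θ}` and the divergence is that constant minus one. The constant comes from the
normalisation `∫ exp (-⟪θ, X⟫) / X₀ dx = 2π e^{-|θ|} / |θ|`. To compute it, integrate over `y`
first: on the slice of fixed `x`, the substitution `y = s sinh u` with `s = √(1 + x²)` turns
`dy / √(s² + y²)` into `du` and a Lorentz boost in the `(X₀, X₂)`-plane into a translation in
`u`, which removes `θ₂`. Swapping the coordinates removes `θ₁` in the same way, and the
remaining rotation-invariant integral is computed in polar coordinates.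
-/

theorem sqrt_sq_add_mul_sinh_sq {s : ℝ} (hs : 0 ≤ s) (u : ℝ) :
    √(s ^ 2 + (s * sinh u) ^ 2) = s * cosh u := by
  rw [show s ^ 2 + (s * sinh u) ^ 2 = (s * cosh u) ^ 2 by rw [mul_pow, mul_pow, cosh_sq]; ring]
  exact sqrt_sq (mul_nonneg hs (cosh_pos u).le)

theorem integral_div_sqrt_sq_add_sq {s : ℝ} (hs : 0 < s) (g : ℝ → ℝ) :
    ∫ y, g y / √(s ^ 2 + y ^ 2) = ∫ u, g (s * sinh u) := by
  have hderiv : ∀ u ∈ univ, HasDerivWithinAt (fun u => s * sinh u) (s * cosh u) univ u :=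
    fun u _ => ((hasDerivAt_sinh u).const_mul s).hasDerivWithinAt
  have hinj : InjOn (fun u => s * sinh u) univ :=
    ((mul_right_injective₀ hs.ne').comp sinh_injective).injOn
  have himage : (fun u => s * sinh u) '' univ = univ := by
    refine image_univ_of_surjective fun y => ⟨arsinh (y / s), ?_⟩
    rw [sinh_arsinh]
    field_simp
  have hcov := integral_image_eq_integral_abs_deriv_smul MeasurableSet.univ hderiv hinj
    (fun y => g y / √(s ^ 2 + y ^ 2))
  rw [himage, setIntegral_univ, setIntegral_univ] at hcov
  rw [hcov]
  congr 1 with u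
  rw [sqrt_sq_add_mul_sinh_sq hs.le, abs_of_pos (mul_pos hs (cosh_pos u)), smul_eq_mul]
  field_simp [(mul_pos hs (cosh_pos u)).ne']

theorem mul_cosh_sub_mul_sinh {a c : ℝ} (ha : 0 < a) (hca : c ^ 2 < a ^ 2) (u : ℝ) :
    a * cosh u - c * sinh u =
      √(a ^ 2 - c ^ 2) * cosh (u - arsinh (c / √(a ^ 2 - c ^ 2))) := by
  set m := √(a ^ 2 - c ^ 2)
  have hm : 0 < m := sqrt_pos.2 (by linarith)
  have hm2 : m ^ 2 = a ^ 2 - c ^ 2 := sq_sqrt (by linarith)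
  have hcosh : cosh (arsinh (c / m)) = a / m := by
    rw [cosh_arsinh, show 1 + (c / m) ^ 2 = (a / m) ^ 2 by field_simp; linarith,
      sqrt_sq (div_pos ha hm).le]
  rw [cosh_sub, hcosh, sinh_arsinh]
  field_simp

theorem integral_comp_boost_div_sqrt {a c s : ℝ} (ha : 0 < a) (hca : c ^ 2 < a ^ 2) (hs : 0 < s)
    (φ : ℝ → ℝ) :
    ∫ y, φ (a * √(s ^ 2 + y ^ 2) - c * y) / √(s ^ 2 + y ^ 2) =
      ∫ y, φ (√(a ^ 2 - c ^ 2) * √(s ^ 2 + y ^ 2)) / √(s ^ 2 + y ^ 2) := by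
  rw [integral_div_sqrt_sq_add_sq hs, integral_div_sqrt_sq_add_sq hs]
  simp only [sqrt_sq_add_mul_sinh_sq hs.le]
  calc ∫ u, φ (a * (s * cosh u) - c * (s * sinh u))
      = ∫ u, φ (s * (√(a ^ 2 - c ^ 2) * cosh (u - arsinh (c / √(a ^ 2 - c ^ 2))))) := by
        congr 1 with u
        rw [← mul_cosh_sub_mul_sinh ha hca]
        ring_nf
    _ = ∫ u, φ (√(a ^ 2 - c ^ 2) * (s * cosh u)) := by
        rw [integral_sub_right_eq_self (fun u => φ (s * (√(a ^ 2 - c ^ 2) * cosh u)))]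
        simp only [mul_left_comm]

theorem integrable_exp_neg_mul_abs {d : ℝ} (hd : 0 < d) :
    Integrable fun x : ℝ => exp (-(d * |x|)) := by
  have hIoi : IntegrableOn (fun x : ℝ => exp (-(d * |x|))) (Ioi 0) :=
    (exp_neg_integrableOn_Ioi 0 hd).congr_fun
      (fun x hx => by simp only [abs_of_pos (mem_Ioi.1 hx), neg_mul]) measurableSet_Ioi
  have hIci : Integrable ((Ici 0).indicator fun x : ℝ => exp (-(d * |x|))) :=
    (integrable_indicator_iff measurableSet_Ici).2
      (Iff.mpr integrableOn_Ici_iff_integrableOn_Ioi hIoi)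
  refine (hIci.add hIci.comp_neg).mono' (by fun_prop) (Eventually.of_forall fun x => ?_)
  rw [norm_of_nonneg (exp_nonneg _)]
  rcases le_total 0 x with hx | hx
  · simp [indicator_of_mem (mem_Ici.2 hx), indicator_nonneg, exp_nonneg]
  · simp [indicator_of_mem (mem_Ici.2 (neg_nonneg.2 hx)), indicator_nonneg, exp_nonneg]

theorem inHypParam_iff {θ : ℝ × ℝ × ℝ} :
    inHypParam θ ↔ 0 < θ.1 ∧ θ.2.1 ^ 2 + θ.2.2 ^ 2 < θ.1 ^ 2 := by
  refine ⟨fun h => ?_, fun ⟨h₀, h⟩ => (sqrt_lt' h₀).2 h⟩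
  have h₀ : 0 < θ.1 := (sqrt_nonneg _).trans_lt h
  exact ⟨h₀, (sqrt_lt' h₀).1 h⟩

theorem mnorm_pos {θ : ℝ × ℝ × ℝ} (hθ : inHypParam θ) : 0 < mnorm θ :=
  sqrt_pos.2 (by linarith [(inHypParam_iff.1 hθ).2])

noncomputable def hypKernel (θ : ℝ × ℝ × ℝ) (x : ℝ × ℝ) : ℝ :=
  exp (-mink3 θ (√(1 + x.1 ^ 2 + x.2 ^ 2), x.1, x.2)) / √(1 + x.1 ^ 2 + x.2 ^ 2)

theorem hypKernel_nonneg (θ : ℝ × ℝ × ℝ) (x : ℝ × ℝ) : 0 ≤ hypKernel θ x := by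
  unfold hypKernel
  positivity

theorem continuous_hypKernel (θ : ℝ × ℝ × ℝ) : Continuous (hypKernel θ) := by
  unfold hypKernel mink3
  exact Continuous.div (by fun_prop) (by fun_prop) fun x =>
    (by positivity : 0 < √(1 + x.1 ^ 2 + x.2 ^ 2)).ne'

theorem mul_abs_add_abs_le_mink3 {θ : ℝ × ℝ × ℝ} (hθ : √(θ.2.1 ^ 2 + θ.2.2 ^ 2) ≤ θ.1)
    (x : ℝ × ℝ) :
    (θ.1 - √(θ.2.1 ^ 2 + θ.2.2 ^ 2)) / 2 * (|x.1| + |x.2|) ≤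
      mink3 θ (√(1 + x.1 ^ 2 + x.2 ^ 2), x.1, x.2) := by
  obtain ⟨a, b, c⟩ := θ
  simp only [mink3] at hθ ⊢
  set B := √(b ^ 2 + c ^ 2)
  set w := √(1 + x.1 ^ 2 + x.2 ^ 2)
  have hcs : b * x.1 + c * x.2 ≤ B * w := by
    rw [← sqrt_mul (by positivity)]
    refine (le_abs_self _).trans (abs_le_sqrt ?_)
    nlinarith [sq_nonneg (b * x.2 - c * x.1), sq_nonneg b, sq_nonneg c]
  have hw : (|x.1| + |x.2|) / 2 ≤ w := by
    refine (le_abs_self _).trans (abs_le_sqrt ?_)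
    nlinarith [sq_nonneg (|x.1| - |x.2|), sq_abs x.1, sq_abs x.2]
  nlinarith

theorem integrable_hypKernel {θ : ℝ × ℝ × ℝ} (hθ : inHypParam θ) : Integrable (hypKernel θ) := by
  set d := (θ.1 - √(θ.2.1 ^ 2 + θ.2.2 ^ 2)) / 2 with hd_def
  have hd : 0 < d := half_pos (sub_pos.2 hθ)
  have hbound : Integrable fun x : ℝ × ℝ => exp (-(d * |x.1|)) * exp (-(d * |x.2|)) := by
    rw [Measure.volume_eq_prod]
    exact (integrable_exp_neg_mul_abs hd).mul_prod (integrable_exp_neg_mul_abs hd)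
  refine hbound.mono' (continuous_hypKernel θ).aestronglyMeasurable
    (Eventually.of_forall fun x => ?_)
  have hw : 1 ≤ √(1 + x.1 ^ 2 + x.2 ^ 2) :=
    one_le_sqrt.2 (by nlinarith [sq_nonneg x.1, sq_nonneg x.2])
  rw [norm_of_nonneg (hypKernel_nonneg θ x), ← exp_add]
  calc hypKernel θ x ≤ exp (-mink3 θ (√(1 + x.1 ^ 2 + x.2 ^ 2), x.1, x.2)) :=
        div_le_self (exp_nonneg _) hw
    _ ≤ _ := by
        have hexp := mul_abs_add_abs_le_mink3 hθ.le x
        rw [← hd_def] at hexp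
        exact exp_le_exp.2 (by linarith)

theorem integral_hypKernel_slice {a c : ℝ} (ha : 0 < a) (hca : c ^ 2 < a ^ 2) (b x : ℝ) :
    ∫ y, hypKernel (a, b, c) (x, y) = ∫ y, hypKernel (√(a ^ 2 - c ^ 2), b, 0) (x, y) := by
  have hs : 0 < √(1 + x ^ 2) := by positivity
  have hw : ∀ y, 1 + x ^ 2 + y ^ 2 = √(1 + x ^ 2) ^ 2 + y ^ 2 := fun y => by
    rw [sq_sqrt (by positivity)]
  have hboost := integral_comp_boost_div_sqrt ha hca hs fun t => exp (b * x - t)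
  simp only [hypKernel, mink3, hw]
  convert hboost using 4 with y y <;> ring_nf

theorem integral_hypKernel_boost {a b c : ℝ} (ha : 0 < a) (h : b ^ 2 + c ^ 2 < a ^ 2) :
    ∫ x, hypKernel (a, b, c) x = ∫ x, hypKernel (√(a ^ 2 - c ^ 2), b, 0) x := by
  have hθ : inHypParam (a, b, c) := inHypParam_iff.2 ⟨ha, h⟩
  have hθ' : inHypParam (√(a ^ 2 - c ^ 2), b, 0) :=
    inHypParam_iff.2 ⟨sqrt_pos.2 (by nlinarith), by rw [sq_sqrt (by nlinarith)]; linarith⟩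
  have hi := integrable_hypKernel hθ
  have hi' := integrable_hypKernel hθ'
  rw [Measure.volume_eq_prod] at hi hi' ⊢
  rw [integral_prod _ hi, integral_prod _ hi']
  simp only [integral_hypKernel_slice ha (by nlinarith : c ^ 2 < a ^ 2)]

theorem integral_hypKernel_swap (a b c : ℝ) :
    ∫ x, hypKernel (a, b, c) x = ∫ x, hypKernel (a, c, b) x := by
  rw [Measure.volume_eq_prod, ← integral_prod_swap]
  congr 1 with x
  simp only [hypKernel, mink3, Prod.fst_swap, Prod.snd_swap]
  ring_nf

theorem integral_Ioi_mul_exp_neg_mul_sqrt_one_add_sq {m : ℝ} (hm : 0 < m) :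
    ∫ r in Ioi (0 : ℝ), r * exp (-(m * √(1 + r ^ 2))) / √(1 + r ^ 2) = exp (-m) / m := by
  have hderiv : ∀ r ∈ Ici (0 : ℝ), HasDerivAt (fun r => -exp (-(m * √(1 + r ^ 2))) / m)
      (r * exp (-(m * √(1 + r ^ 2))) / √(1 + r ^ 2)) r := by
    intro r _
    have hsqrt : HasDerivAt (fun r : ℝ => √(1 + r ^ 2)) (r / √(1 + r ^ 2)) r := by
      have hsq : HasDerivAt (fun r : ℝ => 1 + r ^ 2) (2 * r) r := by
        simpa using (hasDerivAt_pow 2 r).const_add 1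
      convert hsq.sqrt (by positivity) using 1
      field_simp
    refine ((hsqrt.const_mul m).fun_neg.exp.fun_neg.div_const m).congr_deriv ?_
    field_simp
  have hlim : Tendsto (fun r => -exp (-(m * √(1 + r ^ 2))) / m) atTop (𝓝 0) := by
    have hsqrt : Tendsto (fun r : ℝ => √(1 + r ^ 2)) atTop atTop :=
      tendsto_sqrt_atTop.comp (tendsto_atTop_add_const_left _ 1 (tendsto_pow_atTop two_ne_zero))
    simpa using ((tendsto_exp_neg_atTop_nhds_zero.comp (hsqrt.const_mul_atTop hm)).neg.div_const m)
  rw [integral_Ioi_of_hasDerivAt_of_nonneg' hderiv (fun r hr => by have := mem_Ioi.1 hr; positivity)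
    hlim]
  simp [neg_div]

theorem integral_hypKernel_rest_frame {m : ℝ} (hm : 0 < m) :
    ∫ x, hypKernel (m, 0, 0) x = 2 * π * exp (-m) / m := by
  have hpolar : ∀ p : ℝ × ℝ, p.1 • hypKernel (m, 0, 0) (polarCoord.symm p) =
      p.1 * exp (-(m * √(1 + p.1 ^ 2))) / √(1 + p.1 ^ 2) * 1 := by
    intro p
    have hr : 1 + (p.1 * cos p.2) ^ 2 + (p.1 * sin p.2) ^ 2 = 1 + p.1 ^ 2 := by
      linear_combination p.1 ^ 2 * sin_sq_add_cos_sq p.2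
    simp only [hypKernel, mink3, polarCoord_symm_apply, smul_eq_mul, hr]
    ring_nf
  rw [← integral_comp_polarCoord_symm, funext hpolar, polarCoord_target, Measure.volume_eq_prod,
    ← Measure.prod_restrict,
    integral_prod_mul (fun r => r * exp (-(m * √(1 + r ^ 2))) / √(1 + r ^ 2)) fun _ => (1 : ℝ),
    integral_Ioi_mul_exp_neg_mul_sqrt_one_add_sq hm,
    setIntegral_const, volume_real_Ioo_of_le (by linarith [pi_pos]), smul_eq_mul]
  ring

theorem integral_hypKernel {θ : ℝ × ℝ × ℝ} (hθ : inHypParam θ) :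
    ∫ x, hypKernel θ x = 2 * π * exp (-mnorm θ) / mnorm θ := by
  obtain ⟨a, b, c⟩ := θ
  obtain ⟨ha, h⟩ := inHypParam_iff.1 hθ
  simp only at ha h
  have hA : 0 < √(a ^ 2 - c ^ 2) := sqrt_pos.2 (by nlinarith)
  have hA2 : √(a ^ 2 - c ^ 2) ^ 2 = a ^ 2 - c ^ 2 := sq_sqrt (by nlinarith)
  have hm : mnorm (a, b, c) = √(√(a ^ 2 - c ^ 2) ^ 2 - b ^ 2) := by
    rw [hA2, mnorm]; ring_nf
  rw [integral_hypKernel_boost ha h, integral_hypKernel_swap,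
    integral_hypKernel_boost hA (by linarith), hm]
  exact integral_hypKernel_rest_frame (sqrt_pos.2 (by linarith))

theorem hypKernel_sq_div (θ θ' : ℝ × ℝ × ℝ) (x : ℝ × ℝ) :
    hypKernel θ' x ^ 2 / hypKernel θ x = hypKernel ((2 : ℝ) • θ' - θ) x := by
  have hw : 0 < √(1 + x.1 ^ 2 + x.2 ^ 2) := by positivity
  have hexp : exp (-mink3 θ' (√(1 + x.1 ^ 2 + x.2 ^ 2), x.1, x.2)) ^ 2 =
      exp (-mink3 ((2 : ℝ) • θ' - θ) (√(1 + x.1 ^ 2 + x.2 ^ 2), x.1, x.2)) *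
        exp (-mink3 θ (√(1 + x.1 ^ 2 + x.2 ^ 2), x.1, x.2)) := by
    rw [← exp_nat_mul, ← exp_add]
    simp only [mink3, Prod.fst_sub, Prod.snd_sub, Prod.smul_fst, Prod.smul_snd, smul_eq_mul]
    ring_nf
  simp only [hypKernel]
  rw [div_pow, hexp]
  field_simp

theorem hypDensity2_eq (θ : ℝ × ℝ × ℝ) (x : ℝ × ℝ) :
    hypDensity2 θ x = mnorm θ * exp (mnorm θ) / (2 * π) * hypKernel θ x :=
  mul_div_assoc _ _ _

theorem hypDensity2_pos {θ : ℝ × ℝ × ℝ} (hθ : inHypParam θ) (x : ℝ × ℝ) : 0 < hypDensity2 θ x := by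
  have := mnorm_pos hθ
  unfold hypDensity2
  positivity

theorem integrable_hypDensity2 {θ : ℝ × ℝ × ℝ} (hθ : inHypParam θ) :
    Integrable (hypDensity2 θ) := by
  rw [funext (hypDensity2_eq θ)]
  exact (integrable_hypKernel hθ).const_mul _

theorem integral_hypDensity2 {θ : ℝ × ℝ × ℝ} (hθ : inHypParam θ) : ∫ x, hypDensity2 θ x = 1 := by
  have := mnorm_pos hθ
  simp only [hypDensity2_eq, integral_const_mul, integral_hypKernel hθ]
  field_simp
  rw [← exp_add, add_neg_cancel, exp_zero]

theorem hypDensity2_sq_div {θ θ' : ℝ × ℝ × ℝ} (hη : mnorm ((2 : ℝ) • θ' - θ) ≠ 0) (x : ℝ × ℝ) :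
    hypDensity2 θ' x ^ 2 / hypDensity2 θ x =
      mnorm θ' ^ 2 * exp (2 * mnorm θ') /
        (mnorm θ * mnorm ((2 : ℝ) • θ' - θ) * exp (mnorm θ + mnorm ((2 : ℝ) • θ' - θ))) *
        hypDensity2 ((2 : ℝ) • θ' - θ) x := by
  rw [hypDensity2_eq, hypDensity2_eq, hypDensity2_eq, ← hypKernel_sq_div θ θ' x, exp_add,
    two_mul (mnorm θ'), exp_add]
  field_simp

theorem fDivL_sq_sub_one {p q : ℝ × ℝ → ℝ} (hp₀ : ∀ z, p z ≠ 0) (hp : Integrable p)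
    (hq : Integrable q) (hqp : Integrable fun z => q z ^ 2 / p z) (hp₁ : ∫ z, p z = 1)
    (hq₁ : ∫ z, q z = 1) :
    fDivL (fun u => (u - 1) ^ 2) p q = (∫ z, q z ^ 2 / p z) - 1 := by
  have hexpand : ∀ z, p z * (q z / p z - 1) ^ 2 = q z ^ 2 / p z - 2 * q z + p z := fun z => by
    field_simp [hp₀ z]
    ring
  rw [fDivL, funext hexpand, integral_add (f := fun z => q z ^ 2 / p z - 2 * q z)
    (hqp.sub (hq.const_mul 2)) hp, integral_sub hqp (hq.const_mul 2), integral_const_mul, hp₁, hq₁]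
  ring

/-- closed form of the Neyman chi-squared divergence (f(u) = (u−1)²)
between two 2D hyperboloid distributions, assuming 2θ′ − θ lies in the parameter space. -/
theorem neyman_chisq_hyperboloid2 (θ θ' : ℝ × ℝ × ℝ)
    (hθ : inHypParam θ) (hθ' : inHypParam θ') (h2 : inHypParam ((2 : ℝ) • θ' - θ)) :
    fDivL (fun u => (u - 1) ^ 2) (hypDensity2 θ) (hypDensity2 θ') =
      mnorm θ' ^ 2 * Real.exp (2 * mnorm θ') /
        (mnorm θ * mnorm ((2 : ℝ) • θ' - θ) *
          Real.exp (mnorm θ + mnorm ((2 : ℝ) • θ' - θ))) - 1 := by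
  have hratio := hypDensity2_sq_div (mnorm_pos h2).ne'
  have hint : Integrable fun x => hypDensity2 θ' x ^ 2 / hypDensity2 θ x := by
    simpa only [hratio] using (integrable_hypDensity2 h2).const_mul _
  rw [fDivL_sq_sub_one (fun x => (hypDensity2_pos hθ x).ne') (integrable_hypDensity2 hθ)
      (integrable_hypDensity2 hθ') hint (integral_hypDensity2 hθ) (integral_hypDensity2 hθ'),
    integral_congr_ae (ae_of_all _ hratio), integral_const_mul, integral_hypDensity2 h2, mul_one]
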